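/- Let K/k be a finite separable field extension and let V and V' be k-linear subspaces of K, each of codimension 1 (i.e., dim_k V = dim_k V' = [K:k] − 1). Then there exists a nonzero element λ ∈ K with λV = V', and λ is unique up to multiplication by a nonzero element of k: if μ ∈ K is nonzero and μV = V', then μ = cλ for some nonzero c ∈ k. -/

import Mathlib

/-!
Nondegeneracy of the trace form identifies `K` with its `k`-dual, so every hyperplane of `K` is
`ker Tr(a · -)` for some `a ≠ 0`, with `a` determined up to `kˣ`. Multiplication by `μ` carries
`ker Tr(a · -)` to `ker Tr(a μ⁻¹ · -)`; hence if `V = ker Tr(a · -)` and `V' = ker Tr(b · -)`, the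
scalings taking `V` to `V'` are exactly the `μ` with `a μ⁻¹ ∈ kˣ b`, i.e. `μ ∈ kˣ (a / b)`.
-/

open Module LinearMap

theorem Submodule.exists_dual_ne_zero_ker_eq {k V : Type*} [Field k] [AddCommGroup V] [Module k V]
    [FiniteDimensional k V] (W : Submodule k V) (hW : finrank k W + 1 = finrank k V) :
    ∃ φ : Dual k V, φ ≠ 0 ∧ ker φ = W := by
  have hquot : finrank k (V ⧸ W) = finrank k k := by
    have := W.finrank_quotient_add_finrank
    rw [finrank_self]; omega
  let φ : Dual k V := (LinearEquiv.ofFinrankEq _ _ hquot).toLinearMap ∘ₗ W.mkQ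
  have hker : ker φ = W := by rw [LinearEquiv.ker_comp, Submodule.ker_mkQ]
  refine ⟨φ, fun hφ => ?_, hker⟩
  rw [hφ, ker_zero] at hker
  rw [← hker, finrank_top] at hW
  omega

theorem Module.Dual.mem_span_singleton_of_ker_le {k V : Type*} [Field k] [AddCommGroup V]
    [Module k V] {φ ψ : Dual k V} (h : ker φ ≤ ker ψ) : ψ ∈ k ∙ φ := by
  simpa using mem_span_of_iInf_ker_le_ker (L := fun _ : Unit => φ) (by simpa using h)

section traceForm

variable {k K : Type*} [Field k] [Field K] [Algebra k K]

theorem map_mulLeft_ker_traceForm (a : K) {μ : K} (hμ : μ ≠ 0) :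
    (ker (Algebra.traceForm k K a)).map (mulLeft k μ) = ker (Algebra.traceForm k K (a * μ⁻¹)) := by
  ext y
  simp only [Submodule.mem_map, mem_ker, Algebra.traceForm_apply, mulLeft_apply]
  constructor
  · rintro ⟨x, hx, rfl⟩
    rwa [mul_assoc, inv_mul_cancel_left₀ hμ]
  · intro hy
    exact ⟨μ⁻¹ * y, by rwa [← mul_assoc], mul_inv_cancel_left₀ hμ y⟩

variable [FiniteDimensional k K] [Algebra.IsSeparable k K]

theorem exists_ne_zero_ker_traceForm_eq (V : Submodule k K)
    (hV : finrank k V + 1 = finrank k K) :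
    ∃ a : K, a ≠ 0 ∧ ker (Algebra.traceForm k K a) = V := by
  obtain ⟨φ, hφ, rfl⟩ := V.exists_dual_ne_zero_ker_eq hV
  let e := (Algebra.traceForm k K).toDual (traceForm_nondegenerate k K)
  have he : Algebra.traceForm k K (e.symm φ) = φ := e.apply_symm_apply φ
  exact ⟨e.symm φ, by simpa using hφ, by rw [he]⟩

theorem exists_eq_algebraMap_mul_of_ker_traceForm_le {a b : K}
    (h : ker (Algebra.traceForm k K b) ≤ ker (Algebra.traceForm k K a)) :
    ∃ c : k, a = algebraMap k K c * b := by
  obtain ⟨c, hc⟩ := Submodule.mem_span_singleton.mp (Dual.mem_span_singleton_of_ker_le h)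
  refine ⟨c, ((Algebra.traceForm k K).toDual (traceForm_nondegenerate k K)).injective ?_⟩
  rw [← Algebra.smul_def, map_smul]
  exact hc.symm

end traceForm

/-- For a finite separable field extension `K/k` and two `k`-subspaces `V, V' ⊆ K` of
codimension 1, there exists `λ ∈ K`, nonzero and unique up to a nonzero scalar in `k`,
such that `λV = V'`. -/
theorem exists_unique_scaling_of_codim_one_subspaces {k K : Type u}
    [Field k] [Field K] [Algebra k K] [FiniteDimensional k K] [Algebra.IsSeparable k K]
    (V V' : Submodule k K)
    (hV : Module.finrank k V = Module.finrank k K - 1)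
    (hV' : Module.finrank k V' = Module.finrank k K - 1) :
    ∃ lam : K, lam ≠ 0 ∧ Submodule.map (LinearMap.mulLeft k lam) V = V' ∧
      ∀ mu : K, mu ≠ 0 → Submodule.map (LinearMap.mulLeft k mu) V = V' →
        ∃ c : k, c ≠ 0 ∧ mu = algebraMap k K c * lam := by
  have hK : 0 < finrank k K := finrank_pos
  obtain ⟨a, ha, rfl⟩ := exists_ne_zero_ker_traceForm_eq V (by omega)
  obtain ⟨b, hb, rfl⟩ := exists_ne_zero_ker_traceForm_eq V' (by omega)
  refine ⟨a / b, div_ne_zero ha hb, ?_, fun mu hmu hmap => ?_⟩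
  · rw [map_mulLeft_ker_traceForm a (div_ne_zero ha hb), inv_div, mul_div_cancel₀ b ha]
  rw [map_mulLeft_ker_traceForm a hmu] at hmap
  obtain ⟨c, hc⟩ := exists_eq_algebraMap_mul_of_ker_traceForm_le hmap.ge
  have hc0 : c ≠ 0 := by
    rintro rfl
    simp [hmu, ha] at hc
  refine ⟨c⁻¹, inv_ne_zero hc0, ?_⟩
  calc mu = (a * mu⁻¹)⁻¹ * a := by field_simp
    _ = algebraMap k K c⁻¹ * (a / b) := by rw [hc, map_inv₀]; ring
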